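/- For every n ≥ 1, the polynomial P̄ₙ(t₁,t₂) = (1-qt₁)(1-qt₂) Σ_{i=0}^{n-1} q^i(t₁t₂)^i + q^n(1-q)(t₁t₂)^n satisfies the symmetry P̄ₙ(1/(qt₁), 1/(qt₂)) = q^{-n} (t₁t₂)^{-n} P̄ₙ(t₁,t₂). -/

import Mathlib

/-!
Write `u = q t₁ t₂`, so that `P̄ₙ = (1 - q t₁)(1 - q t₂) Sₙ(u) + (1 - q) uⁿ` with `Sₙ(u) = Σ_{i<n} uⁱ`.
The substitution `tⱼ ↦ 1/(q tⱼ)` sends `u` to `u⁻¹`, and `uⁿ Sₙ(u⁻¹) = u Sₙ(u)`. After multiplying by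
`uⁿ`, the two sides differ by `(1 - q)(u - 1) Sₙ(u) - (1 - q)(uⁿ - 1)`, which vanishes by the
geometric series `(u - 1) Sₙ(u) = uⁿ - 1`.
-/

/-- The field `ℚ(q, t₁, t₂)`. -/
noncomputable abbrev K14 : Type := FractionRing (MvPolynomial (Fin 3) ℚ)

noncomputable def q14 : K14 := algebraMap (MvPolynomial (Fin 3) ℚ) K14 (MvPolynomial.X 0)
noncomputable def t₁ : K14 := algebraMap (MvPolynomial (Fin 3) ℚ) K14 (MvPolynomial.X 1)
noncomputable def t₂ : K14 := algebraMap (MvPolynomial (Fin 3) ℚ) K14 (MvPolynomial.X 2)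

/-- The reduced motivic Poincaré series of the A_{2n-1} singularity:
`P̄ₙ(x,y) = (1-qx)(1-qy)Σ_{i=0}^{n-1} qⁱ(xy)ⁱ + qⁿ(1-q)(xy)ⁿ`. -/
noncomputable def PbarA (n : ℕ) (x y : K14) : K14 :=
  (1 - q14 * x) * (1 - q14 * y) * ∑ i ∈ Finset.range n, q14 ^ i * (x * y) ^ i +
    q14 ^ n * (1 - q14) * (x * y) ^ n

open Finset

theorem pow_mul_geom_sum_inv {K : Type*} [DivisionRing K] {u : K} (hu : u ≠ 0) (n : ℕ) :
    u ^ n * ∑ i ∈ range n, u⁻¹ ^ i = u * ∑ i ∈ range n, u ^ i := by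
  rw [mul_sum, mul_sum, ← sum_range_reflect (fun j => u * u ^ j) n]
  refine sum_congr rfl fun i hi => ?_
  have hi : i < n := mem_range.mp hi
  rw [inv_pow, ← pow_sub₀ u hu hi.le, show n - i = (n - 1 - i) + 1 by omega, pow_succ']

lemma q14_ne_zero : q14 ≠ 0 :=
  (map_ne_zero_iff _ (IsFractionRing.injective _ _)).mpr (MvPolynomial.X_ne_zero 0)

lemma t₁_ne_zero : t₁ ≠ 0 :=
  (map_ne_zero_iff _ (IsFractionRing.injective _ _)).mpr (MvPolynomial.X_ne_zero 1)

lemma t₂_ne_zero : t₂ ≠ 0 :=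
  (map_ne_zero_iff _ (IsFractionRing.injective _ _)).mpr (MvPolynomial.X_ne_zero 2)

lemma PbarA_eq_geom_sum (n : ℕ) (x y : K14) :
    PbarA n x y = (1 - q14 * x) * (1 - q14 * y) * ∑ i ∈ range n, (q14 * (x * y)) ^ i +
      (1 - q14) * (q14 * (x * y)) ^ n := by
  simp only [PbarA, mul_pow]
  ring

theorem pow_mul_PbarA_inv {x y : K14} (hx : x ≠ 0) (hy : y ≠ 0) (n : ℕ) :
    (q14 * (x * y)) ^ n * PbarA n (1 / (q14 * x)) (1 / (q14 * y)) = PbarA n x y := by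
  have hq := q14_ne_zero
  have hu : q14 * (x * y) ≠ 0 := by positivity
  have hu_inv : q14 * (1 / (q14 * x) * (1 / (q14 * y))) = (q14 * (x * y))⁻¹ := by
    field_simp
  have hcoeff : q14 * (x * y) * ((1 - q14 * (1 / (q14 * x))) * (1 - q14 * (1 / (q14 * y)))) =
      (1 - q14 * x) * (1 - q14 * y) + (1 - q14) * (q14 * (x * y) - 1) := by
    field_simp
    ring
  rw [PbarA_eq_geom_sum, PbarA_eq_geom_sum, hu_inv]
  generalize q14 * (x * y) = u at hu hcoeff ⊢
  have hinv : u ^ n * u⁻¹ ^ n = 1 := by rw [← mul_pow, mul_inv_cancel₀ hu, one_pow]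
  linear_combination (1 - q14 * (1 / (q14 * x))) * (1 - q14 * (1 / (q14 * y))) *
      pow_mul_geom_sum_inv hu n + (∑ i ∈ range n, u ^ i) * hcoeff + (1 - q14) * hinv +
    (1 - q14) * geom_sum_mul u n

theorem stmt14_general (n : ℕ) :
    PbarA n (1 / (q14 * t₁)) (1 / (q14 * t₂)) =
      q14 ^ (-(n : ℤ)) * (t₁ * t₂) ^ (-(n : ℤ)) * PbarA n t₁ t₂ := by
  have hu : q14 * (t₁ * t₂) ≠ 0 := mul_ne_zero q14_ne_zero (mul_ne_zero t₁_ne_zero t₂_ne_zero)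
  rw [← pow_mul_PbarA_inv t₁_ne_zero t₂_ne_zero n, zpow_neg, zpow_neg, zpow_natCast,
    zpow_natCast, ← mul_inv, ← mul_pow, inv_mul_cancel_left₀ (pow_ne_zero n hu)]

/-- Symmetry: `P̄ₙ(1/(qt₁), 1/(qt₂)) = q⁻ⁿ (t₁t₂)⁻ⁿ P̄ₙ(t₁,t₂)` for `n ≥ 1`. -/
theorem stmt14 (n : ℕ) (hn : 1 ≤ n) :
    PbarA n (1 / (q14 * t₁)) (1 / (q14 * t₂)) =
      q14 ^ (-(n : ℤ)) * (t₁ * t₂) ^ (-(n : ℤ)) * PbarA n t₁ t₂ :=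
  stmt14_general n
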